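/- arXiv:1802.04761 — 3 statements merged into one kernel-verified Lean document; each statement's English description precedes it below -/
import Mathlib

section
/- Let 0 < a < π and let p₁, q₁, p₂, q₂ ∈ L²(0, π) be functions such that p₂ and q₂ vanish a.e. on (0, a) and p₁, q₁ vanish a.e. on (a, π). Then for all integers 0 ≤ j ≤ n with n ≥ 1, on the interval (0, 2a) (i.e., for a.e. t with 0 < t < min(2a, π)) one has (p₁ + p₂)^{*j} * (q₁ + q₂)^{*(n−j)}(t) = (p₁^{*j} * q₁^{*(n−j)})(t) + j (p₁^{*(j−1)} * q₁^{*(n−j)} * p₂)(t) + (n−j)(p₁^{*j} * q₁^{*(n−j−1)} * q₂)(t), where terms with negative convolution exponents are interpreted as zero and f^{*0} * g := g. -/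
open MeasureTheory Real Set

/-- Convolution on (0, π): (f * g)(x) = ∫₀ˣ f(t) g(x−t) dt. -/
noncomputable def conv (f g : ℝ → ℂ) : ℝ → ℂ :=
  fun x => ∫ t in (0:ℝ)..x, f t * g (x - t)

/-- `convPowApp f n g = f^{*n} * g`, with `f^{*0}` acting as the convolution identity. -/
noncomputable def convPowApp (f : ℝ → ℂ) : ℕ → (ℝ → ℂ) → (ℝ → ℂ)
  | 0, g => g
  | n + 1, g => conv f (convPowApp f n g)

/-- `pq f g j k = f^{*j} * g^{*k}` for `j + k ≥ 1`
    (`f^{*0}` acting as the convolution identity). -/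
noncomputable def pq (f g : ℝ → ℂ) (j k : ℕ) : ℝ → ℂ :=
  if k = 0 then convPowApp f (j - 1) f else convPowApp f j (convPowApp g (k - 1) g)

/-- The L²(0, π) measure. -/
noncomputable def μπ : Measure ℝ := volume.restrict (Set.Ioo 0 π)

/-!
Cut `p₁, q₁` off to `(0, a]` and `p₂, q₂` off to `(a, π)`; this changes nothing on `(0, π)`, and
the cut-off functions are integrable on `ℝ` and vanish on `(-∞, 0]`. For such functions the
truncated convolution `conv` is Mathlib's convolution on `ℝ`, hence commutative and a.e.
associative and bilinear. On `(0, 2a)` every convolution with two factors supported in `(a, ∞)`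
vanishes, so expanding `(p₁ + p₂)^{*j} * (q₁ + q₂)^{*k}` leaves only the terms of order at most
one in `p₂, q₂`, and commutativity moves the single high factor to the innermost position.
-/

open Function Filter
open scoped Convolution

section Conv

variable {f f' g g' h : ℝ → ℂ}

theorem conv_comm (f g : ℝ → ℂ) : conv f g = conv g f := by
  funext x
  have hsubst :=
    intervalIntegral.integral_comp_sub_left (fun s => f (x - s) * g s) x (a := 0) (b := x)
  simp only [sub_sub_cancel, sub_self, sub_zero] at hsubst
  simpa only [conv, mul_comm] using hsubst

theorem conv_smul (f g : ℝ → ℂ) (c : ℂ) : conv f (c • g) = c • conv f g := by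
  funext x
  simp only [conv, Pi.smul_apply, smul_eq_mul, ← intervalIntegral.integral_const_mul, mul_left_comm]

theorem support_conv_subset {c d : ℝ} (hf : support f ⊆ Ioi c) (hg : support g ⊆ Ioi d) :
    support (conv f g) ⊆ Ioi (c + d) := by
  intro x hx
  by_contra hxcd
  have hzero : ∀ t, f t * g (x - t) = 0 := fun t => by
    by_contra hne
    obtain ⟨hft, hgt⟩ := mul_ne_zero_iff.1 hne
    have hct : c < t := hf hft
    have hdt : d < x - t := hg hgt
    exact hxcd (by simp only [mem_Ioi]; linarith)
  exact hx (by simp [conv, hzero])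

theorem conv_apply_add_eq_of_support_subset {a x : ℝ} (hx : x ≤ 2 * a) (hf : support f ⊆ Ioi a)
    (hg : support g ⊆ Ioi a) (X : ℝ → ℂ) : conv f (X + g) x = conv f X x := by
  refine intervalIntegral.integral_congr fun t _ => ?_
  by_cases hft : f t = 0
  · simp [hft]
  have hat : a < t := hf hft
  have hgt : g (x - t) = 0 := notMem_support.1 fun h => by
    have : a < x - t := hg h
    linarith
  simp [hgt]

theorem conv_apply_congr {x : ℝ} (hx : 0 ≤ x) (hf : f =ᵐ[volume.restrict (Ioo 0 x)] f')
    (hg : g =ᵐ[volume.restrict (Ioo 0 x)] g') : conv f g x = conv f' g' x := by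
  have hg' : ∀ᵐ t, x - t ∈ Ioo 0 x → g (x - t) = g' (x - t) :=
    (quasiMeasurePreserving_sub_left_of_right_invariant volume x).ae
      ((ae_restrict_iff' measurableSet_Ioo).1 hg)
  simp only [conv, intervalIntegral.integral_of_le hx]
  rw [integral_Ioc_eq_integral_Ioo, integral_Ioc_eq_integral_Ioo]
  refine integral_congr_ae ?_
  filter_upwards [hf, ae_restrict_of_ae hg', ae_restrict_mem measurableSet_Ioo] with t hft hgt ht
  rw [hft, hgt ⟨by linarith [ht.2], by linarith [ht.1]⟩]

theorem conv_congr_ae_restrict {m : ℝ} (hf : f =ᵐ[volume.restrict (Ioo 0 m)] f')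
    (hg : g =ᵐ[volume.restrict (Ioo 0 m)] g') :
    conv f g =ᵐ[volume.restrict (Ioo 0 m)] conv f' g' := by
  filter_upwards [ae_restrict_mem measurableSet_Ioo] with x hx
  have hsub : Ioo 0 x ⊆ Ioo 0 m := Ioo_subset_Ioo_right hx.2.le
  exact conv_apply_congr hx.1.le (ae_restrict_of_ae_restrict_of_subset hsub hf)
    (ae_restrict_of_ae_restrict_of_subset hsub hg)

theorem conv_congr_right_ae (f : ℝ → ℂ) (hg : g =ᵐ[volume] g') : conv f g = conv f g' := by
  funext x
  refine intervalIntegral.integral_congr_ae ?_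
  filter_upwards [(quasiMeasurePreserving_sub_left_of_right_invariant volume x).ae hg]
    with t ht _
  rw [ht]

theorem conv_add_ae (hf : Integrable f) (hg : Integrable g) (hh : Integrable h) :
    conv f (g + h) =ᵐ[volume] conv f g + conv f h := by
  filter_upwards [hf.ae_convolution_exists (ContinuousLinearMap.mul ℂ ℂ) hg,
    hf.ae_convolution_exists (ContinuousLinearMap.mul ℂ ℂ) hh] with x hgx hhx
  simp only [conv, Pi.add_apply, mul_add]
  exact intervalIntegral.integral_add (Integrable.intervalIntegrable hgx)
    (Integrable.intervalIntegrable hhx)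

theorem add_conv_ae (hf : Integrable f) (hg : Integrable g) (hh : Integrable h) :
    conv (f + g) h =ᵐ[volume] conv f h + conv g h := by
  simpa only [conv_comm _ h] using conv_add_ae hh hf hg

theorem conv_eq_convolution (hf : support f ⊆ Ioi 0) (hg : support g ⊆ Ioi 0) :
    conv f g = f ⋆[ContinuousLinearMap.mul ℂ ℂ] g := by
  funext x
  have hvanish : ∀ t ∉ Ioc 0 x, f t * g (x - t) = 0 := by
    intro t ht
    rcases not_and_or.1 ht with ht | ht
    · rw [notMem_support.1 fun h => ht (hf h), zero_mul]
    · have hgt : g (x - t) = 0 := notMem_support.1 fun h => ht (by linarith [mem_Ioi.1 (hg h)])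
      rw [hgt, mul_zero]
  rw [convolution_def]
  simp only [ContinuousLinearMap.mul_apply']
  rw [← setIntegral_eq_integral_of_forall_compl_eq_zero hvanish]
  rcases le_or_gt x 0 with hx | hx
  · rw [Ioc_eq_empty (not_lt.2 hx), Measure.restrict_empty, integral_zero_measure]
    exact notMem_support.1 fun h => hx.not_gt (by simpa using support_conv_subset hf hg h)
  · rw [conv, intervalIntegral.integral_of_le hx.le]

theorem integrable_conv (hf : Integrable f) (hg : Integrable g) (hf₀ : support f ⊆ Ioi 0)
    (hg₀ : support g ⊆ Ioi 0) : Integrable (conv f g) := by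
  rw [conv_eq_convolution hf₀ hg₀]
  exact hf.integrable_convolution _ hg

theorem conv_assoc_ae (hf : Integrable f) (hg : Integrable g) (hh : Integrable h)
    (hf₀ : support f ⊆ Ioi 0) (hg₀ : support g ⊆ Ioi 0) (hh₀ : support h ⊆ Ioi 0) :
    conv (conv f g) h =ᵐ[volume] conv f (conv g h) := by
  have hfg₀ : support (conv f g) ⊆ Ioi 0 := by simpa using support_conv_subset hf₀ hg₀
  have hgh₀ : support (conv g h) ⊆ Ioi 0 := by simpa using support_conv_subset hg₀ hh₀
  rw [conv_eq_convolution hfg₀ hh₀, conv_eq_convolution hf₀ hgh₀, conv_eq_convolution hf₀ hg₀,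
    conv_eq_convolution hg₀ hh₀]
  filter_upwards [hf.norm.ae_convolution_exists (ContinuousLinearMap.mul ℝ ℝ)
    (hg.norm.integrable_convolution (ContinuousLinearMap.mul ℝ ℝ) hh.norm)] with x hx
  exact convolution_assoc (ContinuousLinearMap.mul ℂ ℂ) (ContinuousLinearMap.mul ℂ ℂ)
    (ContinuousLinearMap.mul ℂ ℂ) (ContinuousLinearMap.mul ℂ ℂ) (fun x y z => mul_assoc x y z)
    hf.aestronglyMeasurable hg.aestronglyMeasurable hh.aestronglyMeasurable
    (hf.ae_convolution_exists _ hg) (hg.norm.ae_convolution_exists _ hh.norm) hx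

theorem conv_left_comm_ae (hf : Integrable f) (hg : Integrable g) (hh : Integrable h)
    (hf₀ : support f ⊆ Ioi 0) (hg₀ : support g ⊆ Ioi 0) (hh₀ : support h ⊆ Ioi 0) :
    conv f (conv g h) =ᵐ[volume] conv g (conv f h) := by
  filter_upwards [conv_assoc_ae hf hg hh hf₀ hg₀ hh₀, conv_assoc_ae hg hf hh hg₀ hf₀ hh₀]
    with x hfgh hgfh
  rw [← hfgh, conv_comm f g, hgfh]

end Conv

section ConvPowApp

variable {f g h : ℝ → ℂ}

theorem convPowApp_succ' (f g : ℝ → ℂ) (n : ℕ) :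
    convPowApp f n (conv f g) = conv f (convPowApp f n g) := by
  induction n with
  | zero => rfl
  | succ n ih => exact congrArg (conv f) ih

theorem natCast_smul_conv_convPowApp_sub_one (f g : ℝ → ℂ) (n : ℕ) :
    (n : ℂ) • conv f (convPowApp f (n - 1) g) = (n : ℂ) • convPowApp f n g := by
  cases n <;> simp [convPowApp]

theorem convPowApp_smul (f g : ℝ → ℂ) (c : ℂ) (n : ℕ) :
    convPowApp f n (c • g) = c • convPowApp f n g := by
  induction n with
  | zero => rfl
  | succ n ih => simp only [convPowApp, ih, conv_smul]

theorem support_convPowApp_subset {c : ℝ} (hf : support f ⊆ Ioi 0) (hg : support g ⊆ Ioi c)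
    (n : ℕ) : support (convPowApp f n g) ⊆ Ioi c := by
  induction n with
  | zero => exact hg
  | succ n ih => exact (zero_add c) ▸ support_conv_subset hf ih

theorem integrable_convPowApp (hf : Integrable f) (hg : Integrable g) (hf₀ : support f ⊆ Ioi 0)
    (hg₀ : support g ⊆ Ioi 0) (n : ℕ) : Integrable (convPowApp f n g) := by
  induction n with
  | zero => exact hg
  | succ n ih => exact integrable_conv hf ih hf₀ (support_convPowApp_subset hf₀ hg₀ n)

theorem convPowApp_congr_ae_restrict {m : ℝ} {f' g' : ℝ → ℂ}
    (hf : f =ᵐ[volume.restrict (Ioo 0 m)] f') (hg : g =ᵐ[volume.restrict (Ioo 0 m)] g') (n : ℕ) :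
    convPowApp f n g =ᵐ[volume.restrict (Ioo 0 m)] convPowApp f' n g' := by
  induction n with
  | zero => exact hg
  | succ n ih => exact conv_congr_ae_restrict hf ih

theorem conv_convPowApp_ae (hf : Integrable f) (hg : Integrable g) (hh : Integrable h)
    (hf₀ : support f ⊆ Ioi 0) (hg₀ : support g ⊆ Ioi 0) (hh₀ : support h ⊆ Ioi 0) (n : ℕ) :
    conv f (convPowApp g n h) =ᵐ[volume] convPowApp g n (conv f h) := by
  induction n with
  | zero => rfl
  | succ n ih =>
    calc conv f (conv g (convPowApp g n h))
        =ᵐ[volume] conv g (conv f (convPowApp g n h)) :=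
          conv_left_comm_ae hf hg (integrable_convPowApp hg hh hg₀ hh₀ n) hf₀ hg₀
            (support_convPowApp_subset hg₀ hh₀ n)
      _ = conv g (convPowApp g n (conv f h)) := conv_congr_right_ae g ih

theorem pq_congr_ae_restrict {m : ℝ} {f' g' : ℝ → ℂ} (hf : f =ᵐ[volume.restrict (Ioo 0 m)] f')
    (hg : g =ᵐ[volume.restrict (Ioo 0 m)] g') (j k : ℕ) :
    pq f g j k =ᵐ[volume.restrict (Ioo 0 m)] pq f' g' j k := by
  unfold pq
  split_ifs
  · exact convPowApp_congr_ae_restrict hf hf _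
  · exact convPowApp_congr_ae_restrict hf (convPowApp_congr_ae_restrict hg hg _) _

end ConvPowApp

section FirstOrder

variable {a m : ℝ} {A B U V Y Y' : ℝ → ℂ}

theorem convPowApp_add_first_order (ha : 0 ≤ a) (hm : m ≤ 2 * a) (hA : Integrable A)
    (hU : Integrable U) (hY : Integrable Y) (hY' : Integrable Y') (hA₀ : support A ⊆ Ioi 0)
    (hUa : support U ⊆ Ioi a) (hY₀ : support Y ⊆ Ioi 0) (hY'a : support Y' ⊆ Ioi a) (n : ℕ) :
    convPowApp (A + U) n (Y + Y') =ᵐ[volume.restrict (Ioo 0 m)]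
      convPowApp A n Y + (convPowApp A n Y' + (n : ℂ) • convPowApp A (n - 1) (conv U Y)) := by
  have hU₀ : support U ⊆ Ioi 0 := hUa.trans (Ioi_subset_Ioi ha)
  have hUY : Integrable (conv U Y) := integrable_conv hU hY hU₀ hY₀
  have hUYa : support (conv U Y) ⊆ Ioi a := (add_zero a) ▸ support_conv_subset hUa hY₀
  induction n with
  | zero => simp [convPowApp]
  | succ n ih =>
    set R := convPowApp A n Y' + (n : ℂ) • convPowApp A (n - 1) (conv U Y)
    have hAY := integrable_convPowApp hA hY hA₀ hY₀ n
    have hAY' := integrable_convPowApp hA hY' hA₀ (hY'a.trans (Ioi_subset_Ioi ha)) n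
    have hT := (integrable_convPowApp hA hUY hA₀ (hUYa.trans (Ioi_subset_Ioi ha)) (n - 1)).smul
      (n : ℂ)
    have hRa : support R ⊆ Ioi a := (support_add _ _).trans (union_subset
      (support_convPowApp_subset hA₀ hY'a n)
      ((support_const_smul_subset _ _).trans (support_convPowApp_subset hA₀ hUYa _)))
    -- `U` and `R` both live in `(a, ∞)`, so `conv U R` vanishes on `(0, 2a)`.
    have hUR : ∀ x ∈ Ioo 0 m, conv U (convPowApp A n Y + R) x = conv U (convPowApp A n Y) x :=
      fun x hx => conv_apply_add_eq_of_support_subset (hx.2.le.trans hm) hUa hRa _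
    filter_upwards [conv_congr_ae_restrict EventuallyEq.rfl ih,
      ae_restrict_of_ae (add_conv_ae hA hU (hAY.add (hAY'.add hT))),
      ae_restrict_of_ae (conv_add_ae hA hAY (hAY'.add hT)),
      ae_restrict_of_ae (conv_add_ae hA hAY' hT),
      ae_restrict_of_ae (conv_convPowApp_ae hU hA hY hU₀ hA₀ hY₀ n),
      ae_restrict_of_forall_mem measurableSet_Ioo hUR] with x h₁ h₂ h₃ h₄ h₅ h₆
    simp only [convPowApp] at h₁ ⊢
    rw [h₁, h₂, Pi.add_apply, h₃, h₆, Pi.add_apply, h₄, h₅, conv_smul,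
      natCast_smul_conv_convPowApp_sub_one]
    simp only [Pi.add_apply, Pi.smul_apply, smul_eq_mul, Nat.cast_add, Nat.cast_one,
      add_tsub_cancel_right]
    ring

theorem convPowApp_add_self_first_order (ha : 0 ≤ a) (hm : m ≤ 2 * a) (hA : Integrable A)
    (hU : Integrable U) (hA₀ : support A ⊆ Ioi 0) (hUa : support U ⊆ Ioi a) (n : ℕ) :
    convPowApp (A + U) n (A + U) =ᵐ[volume.restrict (Ioo 0 m)]
      convPowApp A n A + ((n : ℂ) + 1) • convPowApp A n U := by
  filter_upwards [convPowApp_add_first_order ha hm hA hU hA hU hA₀ hUa hA₀ hUa n] with x hx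
  rw [hx, conv_comm U A, convPowApp_succ', natCast_smul_conv_convPowApp_sub_one]
  simp only [Pi.add_apply, Pi.smul_apply, smul_eq_mul]
  ring

theorem pq_add_first_order (ha : 0 ≤ a) (hm : m ≤ 2 * a) (hA : Integrable A) (hB : Integrable B)
    (hU : Integrable U) (hV : Integrable V) (hA₀ : support A ⊆ Ioi 0) (hB₀ : support B ⊆ Ioi 0)
    (hUa : support U ⊆ Ioi a) (hVa : support V ⊆ Ioi a) {j k : ℕ} (hjk : j + k ≠ 0) :
    pq (A + U) (B + V) j k =ᵐ[volume.restrict (Ioo 0 m)]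
      pq A B j k + (j : ℂ) • convPowApp A (j - 1) (convPowApp B k U)
        + (k : ℂ) • convPowApp A j (convPowApp B (k - 1) V) := by
  rcases k with _ | l
  · obtain ⟨i, rfl⟩ : ∃ i, j = i + 1 := Nat.exists_eq_succ_of_ne_zero hjk
    filter_upwards [convPowApp_add_self_first_order ha hm hA hU hA₀ hUa i] with x hx
    simp [pq, hx, convPowApp]
  · have hU₀ : support U ⊆ Ioi 0 := hUa.trans (Ioi_subset_Ioi ha)
    have hswap : conv U (convPowApp B l B) =ᵐ[volume] convPowApp B (l + 1) U := by
      filter_upwards [conv_convPowApp_ae hU hB hB hU₀ hB₀ hB₀ l] with x hx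
      rw [hx, conv_comm U B, convPowApp_succ']
      rfl
    filter_upwards [
      convPowApp_congr_ae_restrict EventuallyEq.rfl
        (convPowApp_add_self_first_order ha hm hB hV hB₀ hVa l) j,
      convPowApp_add_first_order ha hm hA hU (integrable_convPowApp hB hB hB₀ hB₀ l)
        ((integrable_convPowApp hB hV hB₀ (hVa.trans (Ioi_subset_Ioi ha)) l).smul _) hA₀ hUa
        (support_convPowApp_subset hB₀ hB₀ l)
        ((support_const_smul_subset ((l : ℂ) + 1) _).trans
          (support_convPowApp_subset hB₀ hVa l)) j,
      convPowApp_congr_ae_restrict (f := A) EventuallyEq.rfl (ae_restrict_of_ae hswap) (j - 1)]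
      with x h₁ h₂ h₃
    simp only [pq, Nat.add_one_ne_zero, if_false, add_tsub_cancel_right] at h₁ h₂ h₃ ⊢
    rw [h₁, h₂, convPowApp_smul]
    simp only [Pi.add_apply, Pi.smul_apply, smul_eq_mul]
    rw [h₃]
    push_cast
    ring

end FirstOrder

section Cutoff

theorem indicator_ae_eq_restrict_union {α β : Type*} [MeasurableSpace α] [Zero β]
    {μ : Measure α} {s t : Set α} {f : α → β} (hs : MeasurableSet s)
    (hf : ∀ᵐ x ∂μ.restrict t, f x = 0) : s.indicator f =ᵐ[μ.restrict (s ∪ t)] f := by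
  refine (ae_restrict_union_iff s t _).2 ⟨indicator_ae_eq_restrict hs, ?_⟩
  filter_upwards [hf] with x hx
  simp [hx]

variable {a b : ℝ} {f : ℝ → ℂ}

theorem indicator_Ioc_ae_eq (ha : 0 ≤ a) (hab : a < b)
    (hf : ∀ᵐ x ∂volume.restrict (Ioo a b), f x = 0) :
    (Ioc 0 a).indicator f =ᵐ[volume.restrict (Ioo 0 b)] f := by
  rw [← Ioc_union_Ioo_eq_Ioo ha hab]
  exact indicator_ae_eq_restrict_union measurableSet_Ioc hf

theorem indicator_Ioo_ae_eq (ha : 0 ≤ a) (hab : a < b)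
    (hf : ∀ᵐ x ∂volume.restrict (Ioo 0 a), f x = 0) :
    (Ioo a b).indicator f =ᵐ[volume.restrict (Ioo 0 b)] f := by
  rw [← Ioc_union_Ioo_eq_Ioo ha hab, union_comm]
  rw [Measure.restrict_congr_set Ioo_ae_eq_Ioc] at hf
  exact indicator_ae_eq_restrict_union measurableSet_Ioo hf

theorem integrable_indicator_of_memLp {s : Set ℝ} (hs : MeasurableSet s) (hsb : s ⊆ Ioo 0 b)
    (hf : MemLp f 2 (volume.restrict (Ioo 0 b))) : Integrable (s.indicator f) :=
  (IntegrableOn.mono_set (hf.integrable one_le_two) hsb).integrable_indicator hs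

end Cutoff

theorem stmt_3 (a : ℝ) (ha : 0 < a) (ha' : a < π)
    (p₁ q₁ p₂ q₂ : ℝ → ℂ)
    (hp₁ : MemLp p₁ 2 μπ) (hq₁ : MemLp q₁ 2 μπ)
    (hp₂ : MemLp p₂ 2 μπ) (hq₂ : MemLp q₂ 2 μπ)
    (hp₂0 : ∀ᵐ x ∂(volume.restrict (Set.Ioo 0 a)), p₂ x = 0)
    (hq₂0 : ∀ᵐ x ∂(volume.restrict (Set.Ioo 0 a)), q₂ x = 0)
    (hp₁0 : ∀ᵐ x ∂(volume.restrict (Set.Ioo a π)), p₁ x = 0)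
    (hq₁0 : ∀ᵐ x ∂(volume.restrict (Set.Ioo a π)), q₁ x = 0)
    (n j : ℕ) (hn : 1 ≤ n) (hj : j ≤ n) :
    ∀ᵐ t ∂(volume.restrict (Set.Ioo 0 (min (2 * a) π))),
      pq (p₁ + p₂) (q₁ + q₂) j (n - j) t =
        pq p₁ q₁ j (n - j) t
        + (j : ℂ) * convPowApp p₁ (j - 1) (convPowApp q₁ (n - j) p₂) t
        + ((n : ℂ) - (j : ℂ)) * convPowApp p₁ j (convPowApp q₁ (n - j - 1) q₂) t := by
  obtain ⟨k, rfl⟩ : ∃ k, n = j + k := ⟨n - j, by omega⟩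
  have hμ : ae (volume.restrict (Ioo 0 (min (2 * a) π))) ≤ ae (volume.restrict (Ioo 0 π)) :=
    ae_mono (Measure.restrict_mono (Ioo_subset_Ioo_right (min_le_right _ _)) le_rfl)
  have hlow : Ioc 0 a ⊆ Ioo 0 π := Ioc_subset_Ioo_right ha'
  have hhigh : Ioo a π ⊆ Ioo 0 π := Ioo_subset_Ioo_left ha.le
  have hA := (indicator_Ioc_ae_eq ha.le ha' hp₁0).filter_mono hμ
  have hB := (indicator_Ioc_ae_eq ha.le ha' hq₁0).filter_mono hμ
  have hU := (indicator_Ioo_ae_eq ha.le ha' hp₂0).filter_mono hμ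
  have hV := (indicator_Ioo_ae_eq ha.le ha' hq₂0).filter_mono hμ
  filter_upwards [
    pq_add_first_order ha.le (min_le_left _ _)
      (integrable_indicator_of_memLp measurableSet_Ioc hlow hp₁)
      (integrable_indicator_of_memLp measurableSet_Ioc hlow hq₁)
      (integrable_indicator_of_memLp measurableSet_Ioo hhigh hp₂)
      (integrable_indicator_of_memLp measurableSet_Ioo hhigh hq₂)
      (support_indicator_subset.trans Ioc_subset_Ioi_self)
      (support_indicator_subset.trans Ioc_subset_Ioi_self)
      (support_indicator_subset.trans Ioo_subset_Ioi_self)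
      (support_indicator_subset.trans Ioo_subset_Ioi_self) (by omega : j + k ≠ 0),
    pq_congr_ae_restrict (hA.add hU) (hB.add hV) j k, pq_congr_ae_restrict hA hB j k,
    convPowApp_congr_ae_restrict hA (convPowApp_congr_ae_restrict hB hU k) (j - 1),
    convPowApp_congr_ae_restrict hA (convPowApp_congr_ae_restrict hB hV (k - 1)) j]
    with x hexp h₁ h₂ h₃ h₄
  simp only [Nat.add_sub_cancel_left, Nat.cast_add, add_sub_cancel_left]
  simp only [Pi.add_apply, Pi.smul_apply, smul_eq_mul] at hexp
  rw [← h₁, hexp, h₂, h₃, h₄]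
end

section
/- Fix m ∈ ℕ, m ≥ 2, and let b = π/m. The system of vector functions {(sin(smt), cos(smt))ᵀ}_{s ∈ ℤ} is an orthogonal basis of the Hilbert space H = L²(0, b) ⊕ L²(0, b) with the inner product (g, h) = ∫₀ᵇ (conj(g₁) h₁ + conj(g₂) h₂) dt. -/
/-! The exponentials `e^{-inωt}`, `ω = π / b`, form an orthogonal basis of `L²(-b, b)`.
Glue `g = (g₁, g₂)` into one function `F` on `(-b, b]`, equal to `g₂ + i g₁` on `(0, b]` and
to `t ↦ (g₂ - i g₁)(-t)` on `(-b, 0]`. Since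
`e^{-ix}(w + iz) + e^{ix}(w - iz) = 2 (z sin x + w cos x)`, the `n`-th Fourier coefficient of
`F` is `⟪v_n, g⟫ / b` for `v_n = (sin nωt, cos nωt)`, and by the parallelogram law
`‖F‖² = 2 ‖g‖²`. Parseval's identity for `F` therefore becomes `∑ₙ |⟪v_n, g⟫|² = b ‖g‖²`,
which is completeness of the system `v_n`. -/

open MeasureTheory Real Set

open scoped Interval

open Complex (I)

lemma MeasureTheory.MemLp.intervalIntegrable {E : Type*} [NormedAddCommGroup E] {f : ℝ → E}
    {a b : ℝ} (hab : a ≤ b) (hf : MemLp f 2 (volume.restrict (Ioc a b))) :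
    IntervalIntegrable f volume a b :=
  (intervalIntegrable_iff_integrableOn_Ioc_of_le hab).mpr (hf.integrable one_le_two)

lemma MeasureTheory.MemLp.intervalIntegrable_norm_sq {E : Type*} [NormedAddCommGroup E]
    {f : ℝ → E} {a b : ℝ} (hab : a ≤ b) (hf : MemLp f 2 (volume.restrict (Ioc a b))) :
    IntervalIntegrable (fun t ↦ ‖f t‖ ^ 2) volume a b :=
  (intervalIntegrable_iff_integrableOn_Ioc_of_le hab).mpr
    ((memLp_two_iff_integrable_sq_norm hf.1).mp hf)

section GlueReflect

variable {E : Type*} {u v : ℝ → E} {b : ℝ}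

noncomputable def glueReflect (u v : ℝ → E) (t : ℝ) : E :=
  if 0 < t then u t else v (-t)

lemma glueReflect_of_pos {t : ℝ} (ht : 0 < t) : glueReflect u v t = u t := if_pos ht

lemma glueReflect_of_nonpos {t : ℝ} (ht : t ≤ 0) : glueReflect u v t = v (-t) :=
  if_neg ht.not_gt

lemma apply_glueReflect {F : Type*} (φ : E → F) (t : ℝ) :
    φ (glueReflect u v t) = glueReflect (fun s ↦ φ (u s)) (fun s ↦ φ (v s)) t := by
  by_cases ht : 0 < t <;> simp [glueReflect, ht]

lemma mul_glueReflect {R : Type*} [Mul R] (φ u v : ℝ → R) (t : ℝ) :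
    φ t * glueReflect u v t = glueReflect (fun t ↦ φ t * u t) (fun t ↦ φ (-t) * v t) t := by
  by_cases ht : 0 < t <;> simp [glueReflect, ht]

lemma glueReflect_ae_eq_left (hb : 0 ≤ b) :
    glueReflect u v =ᵐ[volume.restrict (Ι (-b) 0)] fun t ↦ v (-t) := by
  rw [uIoc_of_le (neg_nonpos.mpr hb)]
  exact ae_restrict_of_forall_mem measurableSet_Ioc fun t ht ↦ glueReflect_of_nonpos ht.2

lemma glueReflect_ae_eq_right (hb : 0 ≤ b) :
    glueReflect u v =ᵐ[volume.restrict (Ι 0 b)] u := by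
  rw [uIoc_of_le hb]
  exact ae_restrict_of_forall_mem measurableSet_Ioc fun t ht ↦ glueReflect_of_pos ht.1

variable [NormedAddCommGroup E]

lemma IntervalIntegrable.comp_neg_zero (hv : IntervalIntegrable v volume 0 b) :
    IntervalIntegrable (fun t ↦ v (-t)) volume (-b) 0 := by
  simpa using (IntervalIntegrable.iff_comp_neg).mp hv.symm

lemma IntervalIntegrable.glueReflect (hb : 0 ≤ b) (hu : IntervalIntegrable u volume 0 b)
    (hv : IntervalIntegrable v volume 0 b) :
    IntervalIntegrable (glueReflect u v) volume (-b) b :=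
  (hv.comp_neg_zero.congr_ae (glueReflect_ae_eq_left hb).symm).trans
    (hu.congr_ae (glueReflect_ae_eq_right hb).symm)

lemma memLp_two_glueReflect (hb : 0 ≤ b) (hu : MemLp u 2 (volume.restrict (Ioc 0 b)))
    (hv : MemLp v 2 (volume.restrict (Ioc 0 b))) :
    MemLp (glueReflect u v) 2 (volume.restrict (Ioc (-b) b)) := by
  have hb' : -b ≤ b := by linarith
  have hglue := (hu.intervalIntegrable hb).glueReflect hb (hv.intervalIntegrable hb)
  have hsq := (hu.intervalIntegrable_norm_sq hb).glueReflect hb (hv.intervalIntegrable_norm_sq hb)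
  rw [intervalIntegrable_iff_integrableOn_Ioc_of_le hb'] at hglue hsq
  refine (memLp_two_iff_integrable_sq_norm hglue.1).mpr ?_
  have hnorm : (fun t ↦ ‖glueReflect u v t‖ ^ 2)
      = glueReflect (fun t ↦ ‖u t‖ ^ 2) (fun t ↦ ‖v t‖ ^ 2) :=
    funext (apply_glueReflect (‖·‖ ^ 2))
  rwa [hnorm]

variable [NormedSpace ℝ E]

lemma intervalIntegral_glueReflect (hb : 0 ≤ b) (hu : IntervalIntegrable u volume 0 b)
    (hv : IntervalIntegrable v volume 0 b) :
    ∫ t in -b..b, glueReflect u v t = ∫ t in 0..b, (u t + v t) := by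
  rw [← intervalIntegral.integral_add_adjacent_intervals (b := 0)
      (hv.comp_neg_zero.congr_ae (glueReflect_ae_eq_left hb).symm)
      (hu.congr_ae (glueReflect_ae_eq_right hb).symm),
    intervalIntegral.integral_congr_ae_restrict (glueReflect_ae_eq_left hb),
    intervalIntegral.integral_congr_ae_restrict (glueReflect_ae_eq_right hb),
    intervalIntegral.integral_comp_neg, intervalIntegral.integral_add hu hv]
  simp [add_comm]

lemma intervalIntegral_mul_glueReflect {A : Type*} [NormedRing A] [NormedSpace ℝ A]
    (hb : 0 ≤ b) {φ u v : ℝ → A} (hφ : Continuous φ)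
    (hu : IntervalIntegrable u volume 0 b) (hv : IntervalIntegrable v volume 0 b) :
    ∫ t in -b..b, φ t * glueReflect u v t = ∫ t in 0..b, (φ t * u t + φ (-t) * v t) := by
  simp_rw [mul_glueReflect φ u v]
  exact intervalIntegral_glueReflect hb (hu.continuousOn_mul hφ.continuousOn)
    (hv.continuousOn_mul (hφ.comp continuous_neg).continuousOn)

end GlueReflect

section SinCosSystem

variable {ω b : ℝ}

lemma fourier_coe_apply_of_mul_eq_pi (hb : b ≠ 0) (hω : ω * b = π) (n : ℤ) (t : ℝ) :
    fourier n (t : AddCircle (b - -b)) = Complex.exp (n * ω * t * I) := by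
  have hω' : (ω : ℂ) = π / b := by
    rw [eq_div_iff (by exact_mod_cast hb)]
    exact_mod_cast hω
  rw [fourier_coe_apply, hω']
  push_cast
  congr 1
  ring

lemma two_mul_sin_mul_add_cos_mul (x : ℝ) (z w : ℂ) :
    2 * ((sin x : ℂ) * z + (cos x : ℂ) * w) =
      Complex.exp (-x * I) * (w + I * z)
        + Complex.exp (x * I) * (w - I * z) := by
  rw [Complex.exp_mul_I, Complex.exp_mul_I, Complex.cos_neg, Complex.sin_neg,
    ← Complex.ofReal_cos, ← Complex.ofReal_sin]
  linear_combination (2 * (sin x : ℂ) * z) * Complex.I_sq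

lemma fourierCoeffOn_glueReflect (hb : 0 < b) (hω : ω * b = π) {g₁ g₂ : ℝ → ℂ}
    (hg₁ : IntervalIntegrable g₁ volume 0 b) (hg₂ : IntervalIntegrable g₂ volume 0 b) (n : ℤ) :
    fourierCoeffOn (neg_lt_self hb)
        (glueReflect (fun t ↦ g₂ t + I * g₁ t) (fun t ↦ g₂ t - I * g₁ t)) n
      = b⁻¹ * ∫ t in 0..b, ((sin (n * ω * t) : ℂ) * g₁ t + (cos (n * ω * t) : ℂ) * g₂ t) := by
  have hφ : Continuous fun t : ℝ ↦ Complex.exp ((-n : ℤ) * ω * t * I) := by fun_prop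
  rw [fourierCoeffOn_eq_integral]
  simp only [fourier_coe_apply_of_mul_eq_pi hb.ne' hω, smul_eq_mul]
  rw [intervalIntegral_mul_glueReflect hb.le hφ (hg₂.add (hg₁.const_mul _))
    (hg₂.sub (hg₁.const_mul _))]
  have hpt : ∀ t : ℝ, Complex.exp ((-n : ℤ) * ω * t * I) * (g₂ t + I * g₁ t)
        + Complex.exp ((-n : ℤ) * ω * (-t : ℝ) * I) * (g₂ t - I * g₁ t)
      = 2 * ((sin (n * ω * t) : ℂ) * g₁ t + (cos (n * ω * t) : ℂ) * g₂ t) := fun t ↦ by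
    rw [two_mul_sin_mul_add_cos_mul]
    push_cast
    ring_nf
  simp only [hpt, intervalIntegral.integral_const_mul, Complex.real_smul]
  push_cast
  field_simp
  ring

lemma integral_norm_sq_glueReflect (hb : 0 ≤ b) {g₁ g₂ : ℝ → ℂ}
    (hg₁ : MemLp g₁ 2 (volume.restrict (Ioc 0 b))) (hg₂ : MemLp g₂ 2 (volume.restrict (Ioc 0 b))) :
    ∫ t in -b..b,
        ‖glueReflect (fun t ↦ g₂ t + I * g₁ t) (fun t ↦ g₂ t - I * g₁ t) t‖ ^ 2
      = 2 * ∫ t in 0..b, (‖g₁ t‖ ^ 2 + ‖g₂ t‖ ^ 2) := by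
  simp only [apply_glueReflect (fun z : ℂ ↦ ‖z‖ ^ 2)]
  have hu : MemLp (fun t ↦ g₂ t + I * g₁ t) 2 (volume.restrict (Ioc 0 b)) :=
    hg₂.add (hg₁.const_mul _)
  have hv : MemLp (fun t ↦ g₂ t - I * g₁ t) 2 (volume.restrict (Ioc 0 b)) :=
    hg₂.sub (hg₁.const_mul _)
  rw [intervalIntegral_glueReflect hb (hu.intervalIntegrable_norm_sq hb)
      (hv.intervalIntegrable_norm_sq hb),
    ← intervalIntegral.integral_const_mul]
  congr 1 with t
  rw [parallelogram_law_with_norm ℂ, norm_mul, Complex.norm_I, one_mul, add_comm (‖g₁ t‖ ^ 2)]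

theorem hasSum_norm_integral_sin_mul_add_cos_mul_sq (hb : 0 < b) (hω : ω * b = π)
    {g₁ g₂ : ℝ → ℂ} (hg₁ : MemLp g₁ 2 (volume.restrict (Ioc 0 b)))
    (hg₂ : MemLp g₂ 2 (volume.restrict (Ioc 0 b))) :
    HasSum (fun n : ℤ ↦
        ‖∫ t in 0..b, ((sin (n * ω * t) : ℂ) * g₁ t + (cos (n * ω * t) : ℂ) * g₂ t)‖ ^ 2)
      (b * ∫ t in 0..b, (‖g₁ t‖ ^ 2 + ‖g₂ t‖ ^ 2)) := by
  have hparseval := hasSum_sq_fourierCoeffOn (neg_lt_self hb)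
    (memLp_two_glueReflect (u := fun t ↦ g₂ t + I * g₁ t)
      (v := fun t ↦ g₂ t - I * g₁ t) hb.le (hg₂.add (hg₁.const_mul _))
      (hg₂.sub (hg₁.const_mul _)))
  simp only [fourierCoeffOn_glueReflect hb hω (hg₁.intervalIntegrable hb.le)
    (hg₂.intervalIntegrable hb.le), integral_norm_sq_glueReflect hb.le hg₁ hg₂] at hparseval
  have hsum : b ^ 2 * ((b - -b)⁻¹ • (2 * ∫ t in 0..b, (‖g₁ t‖ ^ 2 + ‖g₂ t‖ ^ 2)))
      = b * ∫ t in 0..b, (‖g₁ t‖ ^ 2 + ‖g₂ t‖ ^ 2) := by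
    rw [smul_eq_mul]
    field_simp
    ring
  refine hsum ▸ (hparseval.mul_left (b ^ 2)).congr_fun fun n ↦ ?_
  rw [norm_mul, mul_pow, Complex.norm_real, norm_inv, Real.norm_of_nonneg hb.le]
  field_simp

theorem ae_eq_zero_of_forall_integral_sin_mul_add_cos_mul_eq_zero (hb : 0 < b) (hω : ω * b = π)
    {g₁ g₂ : ℝ → ℂ} (hg₁ : MemLp g₁ 2 (volume.restrict (Ioc 0 b)))
    (hg₂ : MemLp g₂ 2 (volume.restrict (Ioc 0 b)))
    (h : ∀ n : ℤ,
      ∫ t in 0..b, ((sin (n * ω * t) : ℂ) * g₁ t + (cos (n * ω * t) : ℂ) * g₂ t) = 0) :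
    g₁ =ᵐ[volume.restrict (Ioc 0 b)] 0 ∧ g₂ =ᵐ[volume.restrict (Ioc 0 b)] 0 := by
  have hsum := hasSum_norm_integral_sin_mul_add_cos_mul_sq hb hω hg₁ hg₂
  simp only [h, norm_zero, ne_eq, OfNat.ofNat_ne_zero, not_false_eq_true, zero_pow] at hsum
  have hJ : ∫ t in Ioc 0 b, (‖g₁ t‖ ^ 2 + ‖g₂ t‖ ^ 2) = 0 := by
    rw [← intervalIntegral.integral_of_le hb.le]
    exact (mul_eq_zero.mp (hsum.unique hasSum_zero)).resolve_left hb.ne'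
  rw [integral_eq_zero_iff_of_nonneg (f := fun t ↦ ‖g₁ t‖ ^ 2 + ‖g₂ t‖ ^ 2) (fun t ↦ by positivity)
    ((memLp_two_iff_integrable_sq_norm hg₁.1).mp hg₁
      |>.add ((memLp_two_iff_integrable_sq_norm hg₂.1).mp hg₂))] at hJ
  constructor <;> filter_upwards [hJ] with t ht <;>
    have := (add_eq_zero_iff_of_nonneg (by positivity) (by positivity)).mp ht
  · simpa using this.1
  · simpa using this.2

lemma integral_cos_int_mul_eq_zero (hω : ω * b = π) {k : ℤ} (hk : k ≠ 0) :
    ∫ t in 0..b, cos (k * ω * t) = 0 := by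
  have hkω : k * ω ≠ 0 :=
    mul_ne_zero (Int.cast_ne_zero.mpr hk) (left_ne_zero_of_mul (hω ▸ pi_ne_zero))
  rw [intervalIntegral.integral_comp_mul_left cos hkω,
    integral_cos, mul_assoc, hω, sin_int_mul_pi, mul_zero, sin_zero, sub_zero, smul_zero]

lemma integral_sin_mul_sin_add_cos_mul_cos (hω : ω * b = π) {s s' : ℤ} (h : s ≠ s') :
    ∫ t in 0..b, (sin (s * ω * t) * sin (s' * ω * t)
      + cos (s * ω * t) * cos (s' * ω * t)) = 0 := by
  have hcos : ∀ t : ℝ, sin (s * ω * t) * sin (s' * ω * t)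
      + cos (s * ω * t) * cos (s' * ω * t) = cos ((s - s' : ℤ) * ω * t) := by
    intro t
    rw [Int.cast_sub, sub_mul, sub_mul, cos_sub]
    ring
  simp_rw [hcos]
  exact integral_cos_int_mul_eq_zero hω (sub_ne_zero.mpr h)

end SinCosSystem

/-- The system {(sin(smt), cos(smt))ᵀ}_{s∈ℤ} is an orthogonal basis of
L²(0,b) ⊕ L²(0,b), b = π/m: it is pairwise orthogonal, consists of nonzero
vectors, and is complete. -/
theorem stmt_7 (m : ℕ) (hm : 2 ≤ m) (b : ℝ) (hb : b = π / m) :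
    -- pairwise orthogonality
    (∀ s s' : ℤ, s ≠ s' →
      ∫ t in Set.Ioo 0 b,
        ((starRingEnd ℂ) ((Real.sin (s * m * t) : ℝ) : ℂ) * ((Real.sin (s' * m * t) : ℝ) : ℂ)
          + (starRingEnd ℂ) ((Real.cos (s * m * t) : ℝ) : ℂ) * ((Real.cos (s' * m * t) : ℝ) : ℂ))
        = 0) ∧
    -- each vector is nonzero
    (∀ s : ℤ,
      0 < ∫ t in Set.Ioo 0 b, ((Real.sin (s * m * t)) ^ 2 + (Real.cos (s * m * t)) ^ 2)) ∧
    -- completeness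
    (∀ g₁ g₂ : ℝ → ℂ,
      MemLp g₁ 2 (volume.restrict (Set.Ioo 0 b)) →
      MemLp g₂ 2 (volume.restrict (Set.Ioo 0 b)) →
      (∀ s : ℤ,
        ∫ t in Set.Ioo 0 b,
          ((starRingEnd ℂ) ((Real.sin (s * m * t) : ℝ) : ℂ) * g₁ t
            + (starRingEnd ℂ) ((Real.cos (s * m * t) : ℝ) : ℂ) * g₂ t) = 0) →
      (∀ᵐ t ∂(volume.restrict (Set.Ioo 0 b)), g₁ t = 0) ∧
      (∀ᵐ t ∂(volume.restrict (Set.Ioo 0 b)), g₂ t = 0)) := by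
  have hb₀ : 0 < b := hb ▸ div_pos pi_pos (by exact_mod_cast (by omega : 0 < m))
  have hω : (m : ℝ) * b = π := by rw [hb]; field_simp
  simp only [Complex.conj_ofReal, ← integral_Ioc_eq_integral_Ioo (x := (0 : ℝ)),
    ← intervalIntegral.integral_of_le hb₀.le]
  refine ⟨fun s s' hss ↦ ?_, fun s ↦ ?_, fun g₁ g₂ hg₁ hg₂ h ↦ ?_⟩
  · simp_rw [← Complex.ofReal_mul, ← Complex.ofReal_add, intervalIntegral.integral_ofReal,
      integral_sin_mul_sin_add_cos_mul_cos hω hss, Complex.ofReal_zero]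
  · simpa [Real.sin_sq_add_cos_sq] using hb₀
  · rw [Measure.restrict_congr_set Ioo_ae_eq_Ioc] at hg₁ hg₂ ⊢
    exact ae_eq_zero_of_forall_integral_sin_mul_add_cos_mul_eq_zero hb₀ hω hg₁ hg₂ h
end

section
/- Let b > 0, let w₁, w₂ ∈ L²(0, b), and set Δ(λ) = sin(λb) + ∫₀ᵇ (w₁(t) sin(λt) + w₂(t) cos(λt)) dt. Let h₁, h₂ ∈ L²(0, b) and H(λ) = ∫₀ᵇ (h₁(t) sin(λt) + h₂(t) cos(λt)) dt. If H(λ)/Δ(λ) extends to an entire function that is bounded on ℂ, then H ≡ 0. -/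
open MeasureTheory Real Set

/-- Δ(λ) = sin(λb) + ∫₀ᵇ (w₁ sin(λt) + w₂ cos(λt)) dt as an entire function. -/
noncomputable def Delta (b : ℝ) (w₁ w₂ : ℝ → ℂ) (lam : ℂ) : ℂ :=
  Complex.sin (lam * b) +
    ∫ t in Set.Ioo 0 b, (w₁ t * Complex.sin (lam * t) + w₂ t * Complex.cos (lam * t))

/-- H(λ) = ∫₀ᵇ (h₁ sin(λt) + h₂ cos(λt)) dt as an entire function. -/
noncomputable def Hfun (b : ℝ) (h₁ h₂ : ℝ → ℂ) (lam : ℂ) : ℂ :=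
  ∫ t in Set.Ioo 0 b, (h₁ t * Complex.sin (lam * t) + h₂ t * Complex.cos (lam * t))

/-!
By Liouville's theorem the bounded entire quotient `F` is a constant `C`. Along real `λ → ±∞`
the Riemann–Lebesgue lemma sends `H(λ)` and `Δ(λ) - sin(λb)` to `0`, so `C sin(λb) → 0`;
evaluating at the peaks `λ = (π/2 + 2πn)/b` of `sin(λb)` gives `C = 0`.
-/

open Filter Topology
open Complex (I)
open scoped Complex

lemma MeasureTheory.Integrable.mul_exp_ofReal_mul_I {α : Type*} [MeasurableSpace α]
    {μ : Measure α} {g : α → ℂ} (hg : Integrable g μ) {r : α → ℝ} (hr : Measurable r) :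
    Integrable (fun t => g t * cexp (r t * I)) μ :=
  hg.mul_bdd (hr.complex_ofReal.mul_const I).cexp.aestronglyMeasurable <|
    .of_forall fun t => (Complex.norm_exp_ofReal_mul_I (r t)).le

lemma tendsto_setIntegral_mul_exp_cocompact {s : Set ℝ} (hs : MeasurableSet s) (g : ℝ → ℂ)
    {c : ℝ} (hc : c ≠ 0) :
    Tendsto (fun x : ℝ => ∫ t in s, g t * cexp (↑(c * x * t) * I)) (cocompact ℝ) (𝓝 0) := by
  -- at frequency `w = -c x / (2π)` the Fourier kernel `𝐞 (-(t w))` is `exp (i c x t)`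
  have hscale : Tendsto (fun x : ℝ => -c / (2 * π) * x) (cocompact ℝ) (cocompact ℝ) :=
    (Homeomorph.mulLeft₀ _ (by simp [hc, pi_ne_zero])).isClosedEmbedding.tendsto_cocompact
  refine ((Real.tendsto_integral_exp_smul_cocompact (s.indicator g)).comp hscale).congr fun x => ?_
  rw [Function.comp_apply, ← integral_indicator hs]
  refine integral_congr_ae (.of_forall fun t => ?_)
  by_cases ht : t ∈ s
  · simp only [indicator_of_mem ht, Circle.smul_def, fourierChar_apply, smul_eq_mul]
    rw [mul_comm]
    congr 3
    field_simp
  · simp [indicator_of_notMem ht]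

lemma mul_sin_add_mul_cos (a b z : ℂ) :
    a * Complex.sin z + b * Complex.cos z
      = (b - a * I) / 2 * cexp (z * I) + (b + a * I) / 2 * cexp (-z * I) := by
  simp only [Complex.sin, Complex.cos]
  ring_nf

lemma tendsto_setIntegral_sin_add_cos_cocompact {s : Set ℝ} (hs : MeasurableSet s)
    {h₁ h₂ : ℝ → ℂ} (hh₁ : IntegrableOn h₁ s) (hh₂ : IntegrableOn h₂ s) :
    Tendsto (fun x : ℝ => ∫ t in s, (h₁ t * Complex.sin (x * t) + h₂ t * Complex.cos (x * t)))
      (cocompact ℝ) (𝓝 0) := by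
  set g := fun t => (h₂ t - h₁ t * I) / 2
  set g' := fun t => (h₂ t + h₁ t * I) / 2
  have hg : IntegrableOn g s := (hh₂.sub (hh₁.mul_const I)).div_const 2
  have hg' : IntegrableOn g' s := (hh₂.add (hh₁.mul_const I)).div_const 2
  have hsplit : ∀ x : ℝ, ∫ t in s, (h₁ t * Complex.sin (x * t) + h₂ t * Complex.cos (x * t))
      = (∫ t in s, g t * cexp (↑(1 * x * t) * I))
        + ∫ t in s, g' t * cexp (↑(-1 * x * t) * I) := by
    intro x
    rw [← integral_add (hg.mul_exp_ofReal_mul_I (by fun_prop))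
      (hg'.mul_exp_ofReal_mul_I (by fun_prop))]
    refine integral_congr_ae (.of_forall fun t => ?_)
    simp only [mul_sin_add_mul_cos, g, g']
    push_cast
    ring_nf
  simpa [hsplit] using (tendsto_setIntegral_mul_exp_cocompact hs g one_ne_zero).add
    (tendsto_setIntegral_mul_exp_cocompact hs g' (neg_ne_zero.2 one_ne_zero))

lemma eq_zero_of_tendsto_mul_sin_cocompact {b : ℝ} (hb : b ≠ 0) {C : ℂ}
    (h : Tendsto (fun x : ℝ => C * Complex.sin (x * b)) (cocompact ℝ) (𝓝 0)) : C = 0 := by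
  have hpeaks : Tendsto (fun n : ℕ => b⁻¹ * (π / 2 + n * (2 * π))) atTop (cocompact ℝ) := by
    refine (Homeomorph.mulLeft₀ _ (inv_ne_zero hb)).isClosedEmbedding.tendsto_cocompact.comp ?_
    refine (tendsto_atTop_add_const_left _ _ ?_).mono_right atTop_le_cocompact
    exact tendsto_natCast_atTop_atTop.atTop_mul_const (by positivity)
  refine tendsto_nhds_unique ?_ (h.comp hpeaks)
  refine tendsto_const_nhds.congr fun n => ?_
  have hpeak : ((b⁻¹ * (π / 2 + n * (2 * π)) : ℝ) : ℂ) * b = π / 2 + n * (2 * π) := by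
    have hb' : (b : ℂ) ≠ 0 := Complex.ofReal_ne_zero.2 hb
    push_cast
    field_simp
  rw [Function.comp_apply, hpeak, Complex.sin_add_nat_mul_two_pi, Complex.sin_pi_div_two, mul_one]

theorem stmt_10 (b : ℝ) (hb : 0 < b) (w₁ w₂ h₁ h₂ : ℝ → ℂ)
    (hw₁ : MemLp w₁ 2 (volume.restrict (Set.Ioo 0 b)))
    (hw₂ : MemLp w₂ 2 (volume.restrict (Set.Ioo 0 b)))
    (hh₁ : MemLp h₁ 2 (volume.restrict (Set.Ioo 0 b)))
    (hh₂ : MemLp h₂ 2 (volume.restrict (Set.Ioo 0 b)))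
    (F : ℂ → ℂ) (hF : Differentiable ℂ F) (hFbdd : ∃ C : ℝ, ∀ z : ℂ, ‖F z‖ ≤ C)
    (hquot : ∀ z : ℂ, Hfun b h₁ h₂ z = F z * Delta b w₁ w₂ z) :
    ∀ z : ℂ, Hfun b h₁ h₂ z = 0 := by
  obtain ⟨M, hM⟩ := hFbdd
  obtain ⟨C, hC⟩ := hF.exists_const_forall_eq_of_bounded
    (isBounded_iff_forall_norm_le.2 ⟨M, by rintro _ ⟨z, rfl⟩; exact hM z⟩)
  have hH : Tendsto (fun x : ℝ => Hfun b h₁ h₂ x) (cocompact ℝ) (𝓝 0) :=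
    tendsto_setIntegral_sin_add_cos_cocompact measurableSet_Ioo
      (hh₁.integrable one_le_two) (hh₂.integrable one_le_two)
  have hΔ : Tendsto (fun x : ℝ => Delta b w₁ w₂ x - Complex.sin (x * b)) (cocompact ℝ) (𝓝 0) := by
    simpa [Delta] using tendsto_setIntegral_sin_add_cos_cocompact measurableSet_Ioo
      (hw₁.integrable one_le_two) (hw₂.integrable one_le_two)
  have hsin : Tendsto (fun x : ℝ => C * Complex.sin (x * b)) (cocompact ℝ) (𝓝 0) := by
    have hlim := hH.sub (hΔ.const_mul C)
    rw [mul_zero, sub_zero] at hlim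
    refine hlim.congr fun x => ?_
    rw [hquot, hC]
    ring
  intro z
  rw [hquot, hC, eq_zero_of_tendsto_mul_sin_cocompact hb.ne' hsin, zero_mul]
end
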